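/- Let n, m, s, t, d ≥ 1 and Δ̄ ≥ 1 be integers and consider a 4-block ILP instance with blocks A ∈ ℤ^{m×s}, B_i ∈ ℤ^{m×t}, C_i ∈ ℤ^{d×s}, D_i ∈ ℤ^{d×t} (i ∈ [n]), all with entries of absolute value at most Δ̄, right-hand sides b_0 ∈ ℤ^m and b_i ∈ ℤ^d (i ∈ [n]), and objective vectors c_0 ∈ ℤ^s and c_i ∈ ℤ^t (i ∈ [n]). Set t' = (2Δ̄+1)^{m+d}. Then there exists a B-uniform 4-block ILP instance with the same n, m, s, with t' local variables per brick and d + 1 local constraints per brick (blocks A' ∈ ℤ^{m×s}, a single B' ∈ ℤ^{m×t'}, C_i' ∈ ℤ^{(d+1)×s}, D_i' ∈ ℤ^{(d+1)×t'}), all entries of absolute value at most max(Δ̄, 1), such that (i) the new instance is feasible if and only if the original instance is feasible, and (ii) the infimum of the objective value over feasible solutions of the new instance equals the infimum of the objective value over feasible solutions of the original instance. -/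

import Mathlib

/-- Feasibility of a solution `(x0, x)` for the 4-block ILP with data
`(A, B, C, D, b0, b)`. -/
def FourBlockFeasible {n m s t d : ℕ}
    (A : Matrix (Fin m) (Fin s) ℤ) (B : Fin n → Matrix (Fin m) (Fin t) ℤ)
    (C : Fin n → Matrix (Fin d) (Fin s) ℤ) (D : Fin n → Matrix (Fin d) (Fin t) ℤ)
    (b0 : Fin m → ℤ) (b : Fin n → Fin d → ℤ)
    (x0 : Fin s → ℤ) (x : Fin n → Fin t → ℤ) : Prop :=
  (∀ j, 0 ≤ x0 j) ∧ (∀ i j, 0 ≤ x i j) ∧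
  A.mulVec x0 + ∑ i, (B i).mulVec (x i) = b0 ∧
  ∀ i, (C i).mulVec x0 + (D i).mulVec (x i) = b i

/-- The objective value `c0ᵀx0 + Σᵢ cᵢᵀxᵢ` of a solution of a 4-block ILP. -/
def FourBlockObj {n s t : ℕ} (c0 : Fin s → ℤ) (c : Fin n → Fin t → ℤ)
    (x0 : Fin s → ℤ) (x : Fin n → Fin t → ℤ) : ℤ :=
  dotProduct c0 x0 + ∑ i, dotProduct (c i) (x i)


/-!
Every column of the stacked brick matrix `(Bᵢ; Dᵢ)` is an integer point of the box
`[-Δ, Δ]^(m+d)`, so all bricks can share one matrix whose columns are all `(2Δ+1)^(m+d)` box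
points. A solution of the original instance is sent to the new one by summing, for each box
point, the variables of the columns equal to it; the new cost of a box point is the cheapest cost
among those columns, so the objective does not increase. Conversely, an extra row in brick `i`
forces the variables of box points that are not columns of `(Bᵢ; Dᵢ)` to vanish, and the weight of
every other box point can be put on its cheapest column without changing the objective.
-/

open Finset Matrix

section ColumnMerging

variable {ι κ R : Type*} [Fintype ι] [DecidableEq κ]

def fiberSum [AddCommMonoid R] (φ : ι → κ) (x : ι → R) (k : κ) : R :=
  ∑ j with φ j = k, x j

lemma fiberSum_nonneg [AddCommMonoid R] [PartialOrder R] [IsOrderedAddMonoid R]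
    (φ : ι → κ) {x : ι → R} (hx : ∀ j, 0 ≤ x j) (k : κ) : 0 ≤ fiberSum φ x k :=
  sum_nonneg fun j _ => hx j

lemma dotProduct_fiberSum [Fintype κ] [NonUnitalNonAssocSemiring R] (φ : ι → κ) (g : κ → R)
    (x : ι → R) : g ⬝ᵥ fiberSum φ x = (g ∘ φ) ⬝ᵥ x := by
  simp only [dotProduct, fiberSum, mul_sum]
  rw [← sum_fiberwise univ φ]
  refine sum_congr rfl fun k _ => sum_congr rfl fun j hj => ?_
  rw [Function.comp_apply, (mem_filter.1 hj).2]

lemma mulVec_fiberSum [Fintype κ] [NonUnitalNonAssocSemiring R] {ρ : Type*} (M : Matrix ρ κ R)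
    (φ : ι → κ) (x : ι → R) : M *ᵥ fiberSum φ x = M.submatrix id φ *ᵥ x :=
  funext fun r => dotProduct_fiberSum φ (M r) x

variable [LinearOrder R]

noncomputable def cheapest (φ : ι → κ) (c : ι → R) (j : ι) : ι :=
  ((univ.filter fun j' => φ j' = φ j).exists_min_image c ⟨j, by simp⟩).choose

lemma map_cheapest (φ : ι → κ) (c : ι → R) (j : ι) : φ (cheapest φ c j) = φ j :=
  (mem_filter.1 ((univ.filter fun j' => φ j' = φ j).exists_min_image c
    ⟨j, by simp⟩).choose_spec.1).2

lemma cheapest_le (φ : ι → κ) (c : ι → R) {j j' : ι} (h : φ j' = φ j) :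
    c (cheapest φ c j) ≤ c j' :=
  ((univ.filter fun j' => φ j' = φ j).exists_min_image c ⟨j, by simp⟩).choose_spec.2 j' (by simpa)

lemma cheapest_congr (φ : ι → κ) (c : ι → R) {j j' : ι} (h : φ j = φ j') :
    cheapest φ c j = cheapest φ c j' := by
  unfold cheapest
  simp only [h]

lemma cheapest_cheapest (φ : ι → κ) (c : ι → R) (j : ι) :
    cheapest φ c (cheapest φ c j) = cheapest φ c j :=
  cheapest_congr φ c (map_cheapest φ c j)

/-- Off the range of `φ` the value `0` is arbitrary: it never meets a nonzero variable. -/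
noncomputable def minCost [Zero R] (φ : ι → κ) (c : ι → R) : κ → R :=
  Function.extend φ (fun j => c (cheapest φ c j)) 0

lemma minCost_apply [Zero R] (φ : ι → κ) (c : ι → R) (j : ι) :
    minCost φ c (φ j) = c (cheapest φ c j) :=
  Function.FactorsThrough.extend_apply (fun _ _ h => by rw [cheapest_congr φ c h]) _ j

lemma minCost_dotProduct_fiberSum_le [Fintype κ] [Semiring R] [IsOrderedRing R] (φ : ι → κ)
    (c : ι → R) {x : ι → R} (hx : ∀ j, 0 ≤ x j) : minCost φ c ⬝ᵥ fiberSum φ x ≤ c ⬝ᵥ x := by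
  rw [dotProduct_fiberSum]
  refine sum_le_sum fun j _ => mul_le_mul_of_nonneg_right ?_ (hx j)
  rw [Function.comp_apply, minCost_apply]
  exact cheapest_le φ c rfl

variable [DecidableEq ι]

noncomputable def liftToCheapest [Zero R] (φ : ι → κ) (c : ι → R) (y : κ → R) (j : ι) : R :=
  if cheapest φ c j = j then y (φ j) else 0

lemma liftToCheapest_nonneg [Zero R] (φ : ι → κ) (c : ι → R) {y : κ → R} (hy : ∀ k, 0 ≤ y k)
    (j : ι) : 0 ≤ liftToCheapest φ c y j := by
  unfold liftToCheapest
  split_ifs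
  exacts [hy _, le_rfl]

lemma fiberSum_liftToCheapest [AddCommMonoid R] (φ : ι → κ) (c : ι → R) {y : κ → R}
    (hy : ∀ k ∉ Set.range φ, y k = 0) : fiberSum φ (liftToCheapest φ c y) = y := by
  funext k
  by_cases hk : k ∈ Set.range φ
  · obtain ⟨j, rfl⟩ := hk
    rw [fiberSum, sum_eq_single (cheapest φ c j)]
    · rw [liftToCheapest, if_pos (cheapest_cheapest φ c j), map_cheapest φ]
    · intro j' hj' hne
      rw [liftToCheapest, if_neg]
      intro hrep
      exact hne (hrep ▸ cheapest_congr φ c (mem_filter.1 hj').2)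
    · simp [map_cheapest]
  · rw [hy k hk, fiberSum]
    exact sum_eq_zero fun j hj => absurd ⟨j, (mem_filter.1 hj).2⟩ hk

lemma dotProduct_liftToCheapest [Fintype κ] [NonUnitalNonAssocSemiring R] (φ : ι → κ)
    (c : ι → R) {y : κ → R} (hy : ∀ k ∉ Set.range φ, y k = 0) :
    c ⬝ᵥ liftToCheapest φ c y = minCost φ c ⬝ᵥ y := by
  conv_rhs => rw [← fiberSum_liftToCheapest φ c hy, dotProduct_fiberSum]
  refine sum_congr rfl fun j _ => ?_
  by_cases hrep : cheapest φ c j = j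
  · rw [Function.comp_apply, minCost_apply, hrep]
  · simp [liftToCheapest, hrep]

end ColumnMerging

section OffRange

variable {ι κ R : Type*} [Fintype ι] [DecidableEq κ]

def offRange [Zero R] [One R] (φ : ι → κ) (k : κ) : R :=
  if ∃ j, φ j = k then 0 else 1

lemma offRange_dotProduct_fiberSum [Fintype κ] [NonAssocSemiring R] (φ : ι → κ) (x : ι → R) :
    offRange φ ⬝ᵥ fiberSum φ x = 0 := by
  rw [dotProduct_fiberSum]
  exact sum_eq_zero fun j _ => by simp [offRange]

variable [Ring R] [LinearOrder R] [IsOrderedRing R]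

lemma abs_offRange_le_one (φ : ι → κ) (k : κ) : |(offRange φ k : R)| ≤ 1 := by
  unfold offRange
  split_ifs <;> simp

lemma eq_zero_of_offRange_dotProduct_eq_zero [Fintype κ] (φ : ι → κ) {y : κ → R}
    (hy : ∀ k, 0 ≤ y k) (h : offRange φ ⬝ᵥ y = 0) : ∀ k ∉ Set.range φ, y k = 0 := by
  intro k hk
  have hterms := (sum_eq_zero_iff_of_nonneg fun k' _ => ?_).1 h k (mem_univ k)
  · simpa [offRange, show ¬∃ j, φ j = k from hk] using hterms
  · unfold offRange
    split_ifs <;> simp [hy k']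

end OffRange

lemma cons_mulVec_add_cons_mulVec_eq_cons_iff {R σ τ : Type*} [NonUnitalNonAssocSemiring R]
    [Fintype σ] [Fintype τ] {d : ℕ} (C : Matrix (Fin d) σ R) (D : Matrix (Fin d) τ R)
    (u : τ → R) (x : σ → R) (y : τ → R) (b : Fin d → R) :
    of (vecCons 0 C) *ᵥ x + of (vecCons u D) *ᵥ y = vecCons 0 b ↔
      u ⬝ᵥ y = 0 ∧ C *ᵥ x + D *ᵥ y = b := by
  rw [show of (vecCons 0 C) *ᵥ x = vecCons (0 ⬝ᵥ x) (C *ᵥ x) from cons_mulVec _ _ _,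
    show of (vecCons u D) *ᵥ y = vecCons (u ⬝ᵥ y) (D *ᵥ y) from cons_mulVec _ _ _,
    cons_add_cons, vecCons_inj, zero_dotProduct, zero_add]

lemma abs_cons_le {R τ : Type*} [Lattice R] [AddGroup R] {d : ℕ} {u : τ → R}
    {M : Matrix (Fin d) τ R} {a : R} (hu : ∀ j, |u j| ≤ a) (hM : ∀ r j, |M r j| ≤ a)
    (r : Fin (d + 1)) (j : τ) : |of (vecCons u M) r j| ≤ a := by
  refine Fin.cases ?_ (fun r => ?_) r
  · exact hu j
  · exact hM r j

section Merging

variable {n m s t t' d : ℕ} {A : Matrix (Fin m) (Fin s) ℤ}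
  {B : Fin n → Matrix (Fin m) (Fin t) ℤ} {C : Fin n → Matrix (Fin d) (Fin s) ℤ}
  {D : Fin n → Matrix (Fin d) (Fin t) ℤ} {b0 : Fin m → ℤ} {b : Fin n → Fin d → ℤ}
  {B' : Fin n → Matrix (Fin m) (Fin t') ℤ} {D' : Fin n → Matrix (Fin d) (Fin t') ℤ}
  {φ : Fin n → Fin t → Fin t'} {x0 : Fin s → ℤ}

theorem FourBlockFeasible.exists_merged (hB : ∀ i, (B' i).submatrix id (φ i) = B i)
    (hD : ∀ i, (D' i).submatrix id (φ i) = D i) (c0 : Fin s → ℤ) (c : Fin n → Fin t → ℤ)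
    {x : Fin n → Fin t → ℤ} (h : FourBlockFeasible A B C D b0 b x0 x) :
    ∃ y, FourBlockFeasible A B' (fun i => of (vecCons 0 (C i)))
        (fun i => of (vecCons (offRange (φ i)) (D' i))) b0 (fun i => vecCons 0 (b i)) x0 y ∧
      FourBlockObj c0 (fun i => minCost (φ i) (c i)) x0 y ≤ FourBlockObj c0 c x0 x := by
  obtain ⟨hx0, hx, hmain, hloc⟩ := h
  refine ⟨fun i => fiberSum (φ i) (x i),
    ⟨hx0, fun i => fiberSum_nonneg _ (hx i), ?_, fun i => ?_⟩, ?_⟩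
  · simpa only [mulVec_fiberSum, hB] using hmain
  · rw [cons_mulVec_add_cons_mulVec_eq_cons_iff, mulVec_fiberSum, hD]
    exact ⟨offRange_dotProduct_fiberSum _ _, hloc i⟩
  · exact add_le_add_right (sum_le_sum fun i _ => minCost_dotProduct_fiberSum_le _ _ (hx i)) _

theorem FourBlockFeasible.exists_of_merged (hB : ∀ i, (B' i).submatrix id (φ i) = B i)
    (hD : ∀ i, (D' i).submatrix id (φ i) = D i) (c0 : Fin s → ℤ) (c : Fin n → Fin t → ℤ)
    {y : Fin n → Fin t' → ℤ}
    (h : FourBlockFeasible A B' (fun i => of (vecCons 0 (C i)))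
      (fun i => of (vecCons (offRange (φ i)) (D' i))) b0 (fun i => vecCons 0 (b i)) x0 y) :
    ∃ x, FourBlockFeasible A B C D b0 b x0 x ∧
      FourBlockObj c0 c x0 x = FourBlockObj c0 (fun i => minCost (φ i) (c i)) x0 y := by
  obtain ⟨hx0, hy, hmain, hloc⟩ := h
  simp only [cons_mulVec_add_cons_mulVec_eq_cons_iff] at hloc
  have hsupp i := eq_zero_of_offRange_dotProduct_eq_zero (φ i) (hy i) (hloc i).1
  have hmulVec {ρ : ℕ} (M : Matrix (Fin ρ) (Fin t') ℤ) (i : Fin n) :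
      M.submatrix id (φ i) *ᵥ liftToCheapest (φ i) (c i) (y i) = M *ᵥ y i := by
    rw [← mulVec_fiberSum, fiberSum_liftToCheapest _ _ (hsupp i)]
  refine ⟨fun i => liftToCheapest (φ i) (c i) (y i),
    ⟨hx0, fun i => liftToCheapest_nonneg _ _ (hy i), ?_, fun i => ?_⟩, ?_⟩
  · simpa only [← hB, hmulVec] using hmain
  · rw [← hD, hmulVec]
    exact (hloc i).2
  · simp only [FourBlockObj, dotProduct_liftToCheapest _ _ (hsupp _)]

end Merging

section Box

/-- The integer points of the box `[-Δ, Δ]^N`, enumerated by their base-`(2Δ+1)` digits. -/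
def boxPoint (Δ N : ℕ) (k : Fin ((2 * Δ + 1) ^ N)) (l : Fin N) : ℤ :=
  (finFunctionFinEquiv.symm k l : ℤ) - Δ

def boxIndex (Δ N : ℕ) (v : Fin N → ℤ) : Fin ((2 * Δ + 1) ^ N) :=
  finFunctionFinEquiv fun l => ⟨min (v l + Δ).toNat (2 * Δ), by omega⟩

lemma abs_boxPoint_le (Δ N : ℕ) (k : Fin ((2 * Δ + 1) ^ N)) (l : Fin N) :
    |boxPoint Δ N k l| ≤ Δ := by
  have := (finFunctionFinEquiv.symm k l).isLt
  rw [abs_le, boxPoint]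
  omega

lemma boxPoint_boxIndex {Δ N : ℕ} {v : Fin N → ℤ} (hv : ∀ l, |v l| ≤ Δ) :
    boxPoint Δ N (boxIndex Δ N v) = v := by
  funext l
  have := abs_le.1 (hv l)
  simp only [boxPoint, boxIndex, Equiv.symm_apply_apply]
  omega

variable {m t d : ℕ} (Δ : ℕ)

def columnIndex (B : Matrix (Fin m) (Fin t) ℤ) (D : Matrix (Fin d) (Fin t) ℤ) (j : Fin t) :
    Fin ((2 * Δ + 1) ^ (m + d)) :=
  boxIndex Δ (m + d) (Fin.append (fun r => B r j) (fun r => D r j))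

def boxTop (m d : ℕ) : Matrix (Fin m) (Fin ((2 * Δ + 1) ^ (m + d))) ℤ :=
  of fun r k => boxPoint Δ (m + d) k (Fin.castAdd d r)

def boxBottom (m d : ℕ) : Matrix (Fin d) (Fin ((2 * Δ + 1) ^ (m + d))) ℤ :=
  of fun r k => boxPoint Δ (m + d) k (Fin.natAdd m r)

variable {Δ} {B : Matrix (Fin m) (Fin t) ℤ} {D : Matrix (Fin d) (Fin t) ℤ}

lemma boxPoint_columnIndex (hB : ∀ r j, |B r j| ≤ Δ) (hD : ∀ r j, |D r j| ≤ Δ) (j : Fin t) :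
    boxPoint Δ (m + d) (columnIndex Δ B D j) = Fin.append (fun r => B r j) (fun r => D r j) :=
  boxPoint_boxIndex <|
    Fin.addCases (fun r => by simpa using hB r j) (fun r => by simpa using hD r j)

lemma boxTop_submatrix_columnIndex (hB : ∀ r j, |B r j| ≤ Δ) (hD : ∀ r j, |D r j| ≤ Δ) :
    (boxTop Δ m d).submatrix id (columnIndex Δ B D) = B := by
  ext r j
  simp [boxTop, boxPoint_columnIndex hB hD]

lemma boxBottom_submatrix_columnIndex (hB : ∀ r j, |B r j| ≤ Δ) (hD : ∀ r j, |D r j| ≤ Δ) :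
    (boxBottom Δ m d).submatrix id (columnIndex Δ B D) = D := by
  ext r j
  simp [boxBottom, boxPoint_columnIndex hB hD]

end Box

theorem reduction_to_B_uniform_general
    (n m s t d Δ : ℕ)
    (A : Matrix (Fin m) (Fin s) ℤ) (B : Fin n → Matrix (Fin m) (Fin t) ℤ)
    (C : Fin n → Matrix (Fin d) (Fin s) ℤ) (D : Fin n → Matrix (Fin d) (Fin t) ℤ)
    (hA : ∀ i j, |A i j| ≤ (Δ : ℤ)) (hB : ∀ k i j, |B k i j| ≤ (Δ : ℤ))
    (hC : ∀ k i j, |C k i j| ≤ (Δ : ℤ)) (hD : ∀ k i j, |D k i j| ≤ (Δ : ℤ))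
    (b0 : Fin m → ℤ) (b : Fin n → Fin d → ℤ)
    (c0 : Fin s → ℤ) (c : Fin n → Fin t → ℤ) :
    ∃ (A' : Matrix (Fin m) (Fin s) ℤ)
      (B' : Matrix (Fin m) (Fin ((2 * Δ + 1) ^ (m + d))) ℤ)
      (C' : Fin n → Matrix (Fin (d + 1)) (Fin s) ℤ)
      (D' : Fin n → Matrix (Fin (d + 1)) (Fin ((2 * Δ + 1) ^ (m + d))) ℤ)
      (b0' : Fin m → ℤ) (b' : Fin n → Fin (d + 1) → ℤ)
      (c0' : Fin s → ℤ) (c' : Fin n → Fin ((2 * Δ + 1) ^ (m + d)) → ℤ),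
      (∀ i j, |A' i j| ≤ (max Δ 1 : ℤ)) ∧
      (∀ i j, |B' i j| ≤ (max Δ 1 : ℤ)) ∧
      (∀ k i j, |C' k i j| ≤ (max Δ 1 : ℤ)) ∧
      (∀ k i j, |D' k i j| ≤ (max Δ 1 : ℤ)) ∧
      ((∃ x0 x, FourBlockFeasible A' (fun _ => B') C' D' b0' b' x0 x) ↔
        (∃ x0 x, FourBlockFeasible A B C D b0 b x0 x)) ∧
      sInf {v : ℝ | ∃ x0 x, FourBlockFeasible A' (fun _ => B') C' D' b0' b' x0 x ∧
          ((FourBlockObj c0' c' x0 x : ℤ) : ℝ) = v} =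
        sInf {v : ℝ | ∃ x0 x, FourBlockFeasible A B C D b0 b x0 x ∧
          ((FourBlockObj c0 c x0 x : ℤ) : ℝ) = v} := by
  let φ := fun i => columnIndex Δ (B i) (D i)
  have hB' i : (boxTop Δ m d).submatrix id (φ i) = B i :=
    boxTop_submatrix_columnIndex (hB i) (hD i)
  have hD' i : (boxBottom Δ m d).submatrix id (φ i) = D i :=
    boxBottom_submatrix_columnIndex (hB i) (hD i)
  have hΔ : (Δ : ℤ) ≤ (max Δ 1 : ℤ) := by exact_mod_cast le_max_left Δ 1
  have h1 : (1 : ℤ) ≤ (max Δ 1 : ℤ) := by exact_mod_cast le_max_right Δ 1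
  refine ⟨A, boxTop Δ m d, fun i => of (vecCons 0 (C i)),
    fun i => of (vecCons (offRange (φ i)) (boxBottom Δ m d)), b0, fun i => vecCons 0 (b i), c0,
    fun i => minCost (φ i) (c i), fun i j => (hA i j).trans hΔ,
    fun r k => (abs_boxPoint_le _ _ _ _).trans hΔ,
    fun i => abs_cons_le (fun _ => by simp) fun r j => (hC i r j).trans hΔ,
    fun i => abs_cons_le (fun k => (abs_offRange_le_one _ k).trans h1)
      fun r k => (abs_boxPoint_le _ _ _ _).trans hΔ, ?_, ?_⟩
  · constructor
    · rintro ⟨x0, y, hy⟩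
      obtain ⟨x, hx, -⟩ := hy.exists_of_merged hB' hD' c0 c
      exact ⟨x0, x, hx⟩
    · rintro ⟨x0, x, hx⟩
      obtain ⟨y, hy, -⟩ := hx.exists_merged hB' hD' c0 c
      exact ⟨x0, y, hy⟩
  · refine csInf_eq_csInf_of_forall_exists_le ?_ ?_
    · rintro _ ⟨x0, y, hy, rfl⟩
      obtain ⟨x, hx, hobj⟩ := hy.exists_of_merged hB' hD' c0 c
      exact ⟨_, ⟨x0, x, hx, rfl⟩, by rw [hobj]⟩
    · rintro _ ⟨x0, x, hx, rfl⟩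
      obtain ⟨y, hy, hobj⟩ := hx.exists_merged hB' hD' c0 c
      exact ⟨_, ⟨x0, y, hy, rfl⟩, by exact_mod_cast hobj⟩

/-- Every 4-block ILP with entries of absolute value at most `Δ̄` can be reduced to
a `B`-uniform 4-block ILP with the same `n, m, s`, with `t' = (2Δ̄+1)^{m+d}` local
variables and `d + 1` local constraints per brick, entries of absolute value at
most `max Δ̄ 1`, the same feasibility status, and the same infimum of objective
values (taken in `ℝ`). -/
theorem reduction_to_B_uniform
    (n m s t d Δ : ℕ) (hn : 1 ≤ n) (hm : 1 ≤ m) (hs : 1 ≤ s) (ht : 1 ≤ t)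
    (hd : 1 ≤ d) (hΔ : 1 ≤ Δ)
    (A : Matrix (Fin m) (Fin s) ℤ) (B : Fin n → Matrix (Fin m) (Fin t) ℤ)
    (C : Fin n → Matrix (Fin d) (Fin s) ℤ) (D : Fin n → Matrix (Fin d) (Fin t) ℤ)
    (hA : ∀ i j, |A i j| ≤ (Δ : ℤ)) (hB : ∀ k i j, |B k i j| ≤ (Δ : ℤ))
    (hC : ∀ k i j, |C k i j| ≤ (Δ : ℤ)) (hD : ∀ k i j, |D k i j| ≤ (Δ : ℤ))
    (b0 : Fin m → ℤ) (b : Fin n → Fin d → ℤ)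
    (c0 : Fin s → ℤ) (c : Fin n → Fin t → ℤ) :
    ∃ (A' : Matrix (Fin m) (Fin s) ℤ)
      (B' : Matrix (Fin m) (Fin ((2 * Δ + 1) ^ (m + d))) ℤ)
      (C' : Fin n → Matrix (Fin (d + 1)) (Fin s) ℤ)
      (D' : Fin n → Matrix (Fin (d + 1)) (Fin ((2 * Δ + 1) ^ (m + d))) ℤ)
      (b0' : Fin m → ℤ) (b' : Fin n → Fin (d + 1) → ℤ)
      (c0' : Fin s → ℤ) (c' : Fin n → Fin ((2 * Δ + 1) ^ (m + d)) → ℤ),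
      (∀ i j, |A' i j| ≤ (max Δ 1 : ℤ)) ∧
      (∀ i j, |B' i j| ≤ (max Δ 1 : ℤ)) ∧
      (∀ k i j, |C' k i j| ≤ (max Δ 1 : ℤ)) ∧
      (∀ k i j, |D' k i j| ≤ (max Δ 1 : ℤ)) ∧
      ((∃ x0 x, FourBlockFeasible A' (fun _ => B') C' D' b0' b' x0 x) ↔
        (∃ x0 x, FourBlockFeasible A B C D b0 b x0 x)) ∧
      sInf {v : ℝ | ∃ x0 x, FourBlockFeasible A' (fun _ => B') C' D' b0' b' x0 x ∧
          ((FourBlockObj c0' c' x0 x : ℤ) : ℝ) = v} =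
        sInf {v : ℝ | ∃ x0 x, FourBlockFeasible A B C D b0 b x0 x ∧
          ((FourBlockObj c0 c x0 x : ℤ) : ℝ) = v} :=
  reduction_to_B_uniform_general n m s t d Δ A B C D hA hB hC hD b0 b c0 c
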